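/- arXiv:1607.02945 — 6 statements merged into one kernel-verified Lean document; each statement's English description precedes it below -/
import Mathlib

section
/- For every natural number a, no transitive avoidance game on a board of 2^a points is a Player I win. -/
/-- A strategy: given the history of moves so far (in chronological order),
choose the next point to claim. -/
abbrev Strategy (X : Type*) := List X → X

/-- A strategy is valid if, whenever the history has no repeats and the board is
not yet full, it picks a previously unclaimed point. -/
def ValidStrategy {X : Type*} [Fintype X] (s : Strategy X) : Prop :=
  ∀ h : List X, h.Nodup → h.length < Fintype.card X → s h ∉ h

/-- The play (history of moves) after `k` moves, when Player I uses `sI`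
(moving at even times) and Player II uses `sII` (moving at odd times). -/
def play {X : Type*} (sI sII : Strategy X) : ℕ → List X
  | 0 => []
  | k + 1 =>
      let h := play sI sII k
      h ++ [if k % 2 = 0 then sI h else sII h]

/-- The set of points claimed by Player I in a history: the moves at even positions. -/
def claimedI {X : Type*} (h : List X) : Set X :=
  { x | ∃ i : ℕ, i % 2 = 0 ∧ h[i]? = some x }

/-- The set of points claimed by Player II in a history: the moves at odd positions. -/
def claimedII {X : Type*} (h : List X) : Set X :=
  { x | ∃ i : ℕ, i % 2 = 1 ∧ h[i]? = some x }

/-- A set of points contains a line of `ℒ`. -/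
def ContainsLine {X : Type*} (ℒ : Set (Finset X)) (S : Set X) : Prop :=
  ∃ L ∈ ℒ, ↑L ⊆ S

/-- The avoidance game with lines `ℒ` is a Player I win: Player I has a valid strategy
such that against every valid strategy of Player II there is a moment at which
Player II's claimed set contains a line while Player I's claimed set does not
(by monotonicity of the claimed sets, this says exactly that Player II's set comes
to contain a line strictly before Player I's set does). -/
def PIWin {X : Type*} [Fintype X] (ℒ : Set (Finset X)) : Prop :=
  ∃ sI : Strategy X, ValidStrategy sI ∧
    ∀ sII : Strategy X, ValidStrategy sII →
      ∃ k ≤ Fintype.card X,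
        ContainsLine ℒ (claimedII (play sI sII k)) ∧
        ¬ ContainsLine ℒ (claimedI (play sI sII k))

/-- A permutation of the board is an automorphism of the game if it maps the
family of lines onto itself. -/
def IsGameAuto {X : Type*} [DecidableEq X] (ℒ : Set (Finset X)) (g : Equiv.Perm X) : Prop :=
  ∀ L : Finset X, L ∈ ℒ ↔ L.image g ∈ ℒ

/-- The game is transitive if its automorphism group acts transitively on the board. -/
def TransitiveGame {X : Type*} [DecidableEq X] (ℒ : Set (Finset X)) : Prop :=
  ∀ x y : X, ∃ g : Equiv.Perm X, IsGameAuto ℒ g ∧ g x = y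

/-!
If the automorphism group of the game contains a fixed-point-free involution `σ`, Player II
can answer every move `x` of Player I by `σ x`. After each of his moves his claimed set is the
image under `σ` of Player I's, so if he ever completes a line `L`, Player I has already
completed the line `σ L`.

Such an involution exists on a board of `2 ^ a ≥ 2` points: a Sylow `2`-subgroup `P` of the
transitive automorphism group is still transitive, as `|G : P|` is odd, and a central involution
of `P` fixes no point, since its fixed-point set is `P`-invariant. On a one-point board Player II
never moves before the game ends.
-/

open Equiv MulAction

section Group

variable {G X : Type*} [Group G] [MulAction G X]

theorem MulAction.ncard_orbit_subgroup_eq_relIndex (H : Subgroup G) (x : X) :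
    (orbit H x).ncard = (stabilizer G x).relIndex H := by
  rw [Subgroup.relIndex, ← index_stabilizer]
  rfl

/-- The `p`-part `p ^ n` of `|G : G_x| = |X|` survives in `|P : P_x|`, because `|G : P|` is
prime to `p`. -/
theorem Sylow.isPretransitive_of_card_eq_prime_pow [Finite G] [IsPretransitive G X]
    {p n : ℕ} [hp : Fact p.Prime] (hX : Nat.card X = p ^ n) (P : Sylow p G) :
    IsPretransitive P X := by
  have hX0 : Nat.card X ≠ 0 := by rw [hX]; exact pow_ne_zero n hp.out.ne_zero
  have : Finite X := Nat.finite_of_card_ne_zero hX0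
  obtain ⟨x⟩ : Nonempty X := (Nat.card_pos_iff.mp (Nat.pos_of_ne_zero hX0)).1
  have hdvd : p ^ n ∣ (stabilizer G x).relIndex P := by
    have hcop : (p ^ n).Coprime (P : Subgroup G).index :=
      ((Nat.Prime.coprime_iff_not_dvd hp.out).mpr P.not_dvd_index).pow_left n
    refine hcop.dvd_of_dvd_mul_right ?_
    rw [← Subgroup.inf_relIndex_right, Subgroup.relIndex_mul_index inf_le_right,
      ← Subgroup.relIndex_mul_index inf_le_left, index_stabilizer_of_transitive, hX]
    exact dvd_mul_left _ _
  rw [isPretransitive_iff_orbit_eq_univ x]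
  refine Set.eq_of_subset_of_ncard_le (Set.subset_univ _) ?_ (Set.toFinite _)
  rw [Set.ncard_univ, hX, ncard_orbit_subgroup_eq_relIndex]
  refine Nat.le_of_dvd ?_ hdvd
  rw [← ncard_orbit_subgroup_eq_relIndex]
  exact (Set.ncard_pos (Set.toFinite _)).mpr ⟨x, mem_orbit_self x⟩

theorem MulAction.smul_eq_self_of_mem_center [IsPretransitive G X] {z : G}
    (hz : z ∈ Subgroup.center G) {x : X} (hx : z • x = x) (y : X) : z • y = y := by
  obtain ⟨g, rfl⟩ := exists_smul_eq G x y
  rw [smul_smul, ← Subgroup.mem_center_iff.mp hz g, mul_smul, hx]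

theorem IsPGroup.exists_orderOf_eq_prime_forall_smul_ne [Finite G] [FaithfulSMul G X]
    [IsPretransitive G X] [Nontrivial X] {p : ℕ} [hp : Fact p.Prime] (hG : IsPGroup p G) :
    ∃ z : G, orderOf z = p ∧ ∀ x : X, z • x ≠ x := by
  have : Nontrivial G := by
    obtain ⟨x, y, hxy⟩ := exists_pair_ne X
    obtain ⟨g, hg⟩ := exists_smul_eq G x y
    exact nontrivial_of_ne g 1 (by rintro rfl; exact hxy (by rw [← hg, one_smul]))
  obtain ⟨k, hk, hcard⟩ :=
    (hG.to_subgroup (Subgroup.center G)).nontrivial_iff_card.mp hG.center_nontrivial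
  obtain ⟨z, hz⟩ := exists_prime_orderOf_dvd_card' (G := Subgroup.center G) p
    (hcard ▸ dvd_pow_self p hk.ne')
  refine ⟨z, by rw [Subgroup.orderOf_coe, hz], fun x hx => hp.out.one_lt.ne' ?_⟩
  have hz1 : (z : G) = 1 := eq_of_smul_eq_smul fun y => by
    rw [smul_eq_self_of_mem_center z.2 hx y, one_smul]
  rw [← hz, ← Subgroup.orderOf_coe, hz1, orderOf_one]

theorem exists_orderOf_eq_prime_forall_smul_ne_of_card_eq_prime_pow [Finite G]
    [FaithfulSMul G X] [IsPretransitive G X] {p n : ℕ} [hp : Fact p.Prime]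
    (hX : Nat.card X = p ^ n) (hn : n ≠ 0) :
    ∃ g : G, orderOf g = p ∧ ∀ x : X, g • x ≠ x := by
  obtain ⟨P⟩ := Sylow.nonempty (p := p) (G := G)
  have := P.isPretransitive_of_card_eq_prime_pow hX
  have : Finite X := Nat.finite_of_card_ne_zero (by rw [hX]; exact pow_ne_zero n hp.out.ne_zero)
  have : Nontrivial X :=
    Finite.one_lt_card_iff_nontrivial.mp (hX ▸ Nat.one_lt_pow hn hp.out.one_lt)
  obtain ⟨z, hz, hfree⟩ := P.isPGroup'.exists_orderOf_eq_prime_forall_smul_ne (X := X)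
  exact ⟨z, by rw [Subgroup.orderOf_coe, hz], hfree⟩

end Group

section Play

variable {X : Type*}

theorem List.getElem?_concat_eq_some_iff {h : List X} {x y : X} {i : ℕ} :
    (h ++ [x])[i]? = some y ↔ h[i]? = some y ∨ (i = h.length ∧ x = y) := by
  rcases lt_trichotomy i h.length with hi | rfl | hi
  · simp [List.getElem?_append_left hi, hi.ne]
  · simp
  · simp [List.getElem?_eq_none (by simpa using hi : (h ++ [x]).length ≤ i),
      List.getElem?_eq_none hi.le, hi.ne']

theorem claimedI_concat_of_even {h : List X} (hh : h.length % 2 = 0) (x : X) :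
    claimedI (h ++ [x]) = insert x (claimedI h) := by
  ext y
  simp only [claimedI, Set.mem_ofPred_eq, Set.mem_insert_iff, List.getElem?_concat_eq_some_iff]
  grind

theorem claimedI_concat_of_odd {h : List X} (hh : h.length % 2 = 1) (x : X) :
    claimedI (h ++ [x]) = claimedI h := by
  ext y
  simp only [claimedI, Set.mem_ofPred_eq, List.getElem?_concat_eq_some_iff]
  grind

theorem claimedII_concat_of_even {h : List X} (hh : h.length % 2 = 0) (x : X) :
    claimedII (h ++ [x]) = claimedII h := by
  ext y
  simp only [claimedII, Set.mem_ofPred_eq, List.getElem?_concat_eq_some_iff]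
  grind

theorem claimedII_concat_of_odd {h : List X} (hh : h.length % 2 = 1) (x : X) :
    claimedII (h ++ [x]) = insert x (claimedII h) := by
  ext y
  simp only [claimedII, Set.mem_ofPred_eq, Set.mem_insert_iff, List.getElem?_concat_eq_some_iff]
  grind

theorem mem_iff_mem_claimedI_or_mem_claimedII {h : List X} {x : X} :
    x ∈ h ↔ x ∈ claimedI h ∨ x ∈ claimedII h := by
  simp only [List.mem_iff_getElem?, claimedI, claimedII, Set.mem_ofPred_eq]
  grind

theorem claimedII_eq_empty_of_length_le_one {h : List X} (hh : h.length ≤ 1) :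
    claimedII h = ∅ := by
  ext x
  simp only [claimedII, Set.mem_ofPred_eq, Set.mem_empty_iff_false, iff_false, not_exists,
    not_and]
  intro i hi
  rw [List.getElem?_eq_none (by omega)]
  simp

theorem notMem_of_claimedII_eq_image {f : X → X} (hf : Function.Involutive f) {h : List X}
    (hinv : claimedII h = f '' claimedI h) {x : X} (hx : x ∉ h) : f x ∉ h := by
  have hmem (y : X) : y ∈ h ↔ y ∈ claimedI h ∨ f y ∈ claimedI h := by
    rw [mem_iff_mem_claimedI_or_mem_claimedII, hinv,
      Set.mem_image_iff_of_inverse hf.leftInverse hf.rightInverse]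
  rw [hmem, hf x]
  rw [hmem] at hx
  tauto

variable {sI sII : Strategy X}

theorem play_succ (k : ℕ) :
    play sI sII (k + 1) =
      play sI sII k ++ [if k % 2 = 0 then sI (play sI sII k) else sII (play sI sII k)] :=
  rfl

theorem play_succ_of_even {k : ℕ} (hk : k % 2 = 0) :
    play sI sII (k + 1) = play sI sII k ++ [sI (play sI sII k)] := by
  rw [play_succ, if_pos hk]

theorem play_succ_of_odd {k : ℕ} (hk : k % 2 = 1) :
    play sI sII (k + 1) = play sI sII k ++ [sII (play sI sII k)] := by
  rw [play_succ, if_neg (by omega)]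

theorem length_play (k : ℕ) : (play sI sII k).length = k := by
  induction k with
  | zero => rfl
  | succ k ih => simp [play_succ, ih]

theorem nodup_play [Fintype X] (hI : ValidStrategy sI) (hII : ValidStrategy sII) :
    ∀ {k : ℕ}, k ≤ Fintype.card X → (play sI sII k).Nodup
  | 0, _ => List.nodup_nil
  | k + 1, hk => by
    have hnd := nodup_play hI hII (k := k) (by omega)
    have hlen : (play sI sII k).length < Fintype.card X := by rw [length_play]; omega
    rw [play_succ, ← List.concat_eq_append]
    refine hnd.concat ?_
    split_ifs
    exacts [hI _ hnd hlen, hII _ hnd hlen]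

end Play

section Criterion

variable {X : Type*} [Fintype X] [DecidableEq X]

theorem not_PIWin_of_image_claimedII_subset (ℒ : Set (Finset X)) {σ : Perm X}
    (hσ : IsGameAuto ℒ σ) {τ : Strategy X} (hτ : ValidStrategy τ)
    (hsub : ∀ sI : Strategy X, ValidStrategy sI → ∀ k ≤ Fintype.card X,
      σ '' claimedII (play sI τ k) ⊆ claimedI (play sI τ k)) :
    ¬ PIWin ℒ := by
  rintro ⟨sI, hI, hwin⟩
  obtain ⟨k, hk, ⟨L, hL, hLII⟩, hnI⟩ := hwin τ hτ
  refine hnI ⟨L.image σ, (hσ L).mp hL, ?_⟩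
  rw [Finset.coe_image]
  exact (Set.image_mono hLII).trans (hsub sI hI k hk)

end Criterion

section Mirror

variable {X : Type*} [DecidableEq X] [Nonempty X]

noncomputable def freshPoint (h : List X) : X :=
  Classical.epsilon (· ∉ h)

/-- The fallback `freshPoint` only makes the strategy valid: against a fixed-point-free involution
`σ` it is never used. -/
noncomputable def mirrorStrategy (σ : Perm X) : Strategy X := fun h =>
  match h.getLast? with
  | some x => if σ x ∈ h then freshPoint h else σ x
  | none => freshPoint h

theorem mirrorStrategy_concat {σ : Perm X} {h : List X} {x : X} (hx : σ x ∉ h ++ [x]) :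
    mirrorStrategy σ (h ++ [x]) = σ x := by
  simp [mirrorStrategy, hx]

variable [Fintype X]

theorem freshPoint_notMem {h : List X} (hlen : h.length < Fintype.card X) :
    freshPoint h ∉ h := by
  apply Classical.epsilon_spec (p := (· ∉ h))
  obtain ⟨x, -, hx⟩ := Finset.exists_mem_notMem_of_card_lt_card
    (s := h.toFinset) (t := Finset.univ) ((List.toFinset_card_le h).trans_lt hlen)
  exact ⟨x, by simpa using hx⟩

theorem validStrategy_freshPoint : ValidStrategy (freshPoint : Strategy X) :=
  fun _ _ hlen => freshPoint_notMem hlen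

theorem not_PIWin_of_card_le_one (ℒ : Set (Finset X)) (hX : Fintype.card X ≤ 1) :
    ¬ PIWin ℒ := by
  refine not_PIWin_of_image_claimedII_subset ℒ (σ := 1)
    (fun L => by rw [Perm.coe_one, Finset.image_id]) validStrategy_freshPoint ?_
  intro sI _ k hk
  rw [claimedII_eq_empty_of_length_le_one (by rw [length_play]; omega), Set.image_empty]
  exact Set.empty_subset _

theorem validStrategy_mirrorStrategy (σ : Perm X) : ValidStrategy (mirrorStrategy σ) := by
  intro h _ hlen
  unfold mirrorStrategy
  split
  · split_ifs with hσx
    exacts [freshPoint_notMem hlen, hσx]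
  · exact freshPoint_notMem hlen

variable {σ : Perm X}

theorem claimedII_play_mirrorStrategy (hσ : Function.Involutive σ) (hfree : ∀ x, σ x ≠ x)
    {sI : Strategy X} (hI : ValidStrategy sI) :
    ∀ m : ℕ, 2 * m ≤ Fintype.card X →
      claimedII (play sI (mirrorStrategy σ) (2 * m)) =
        σ '' claimedI (play sI (mirrorStrategy σ) (2 * m))
  | 0, _ => by
    change claimedII [] = σ '' claimedI []
    simp [claimedI, claimedII]
  | m + 1, hm => by
    set h := play sI (mirrorStrategy σ) (2 * m)
    have ih := claimedII_play_mirrorStrategy hσ hfree hI m (by omega)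
    have hlen : h.length = 2 * m := length_play _
    have hnd := nodup_play hI (validStrategy_mirrorStrategy σ) (k := 2 * m) (by omega)
    have hx : sI h ∉ h := hI h hnd (by omega)
    have hσx : σ (sI h) ∉ h ++ [sI h] := by
      simpa [hfree] using notMem_of_claimedII_eq_image hσ ih hx
    have hplay : play sI (mirrorStrategy σ) (2 * (m + 1)) = h ++ [sI h] ++ [σ (sI h)] := by
      rw [show 2 * (m + 1) = 2 * m + 1 + 1 by ring, play_succ_of_odd (by omega),
        play_succ_of_even (by omega), mirrorStrategy_concat hσx]
    have hlen' : (h ++ [sI h]).length % 2 = 1 := by simp [hlen]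
    rw [hplay, claimedII_concat_of_odd hlen', claimedII_concat_of_even (by omega),
      claimedI_concat_of_odd hlen', claimedI_concat_of_even (by omega), ih,
      Set.image_insert_eq]

theorem image_claimedII_play_mirrorStrategy_subset (hσ : Function.Involutive σ)
    (hfree : ∀ x, σ x ≠ x) {sI : Strategy X} (hI : ValidStrategy sI) {k : ℕ}
    (hk : k ≤ Fintype.card X) :
    σ '' claimedII (play sI (mirrorStrategy σ) k) ⊆ claimedI (play sI (mirrorStrategy σ) k) := by
  obtain ⟨m, rfl | rfl⟩ := Nat.even_or_odd' k
  · rw [claimedII_play_mirrorStrategy hσ hfree hI m hk, hσ.leftInverse.image_image]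
  · have hlen : (play sI (mirrorStrategy σ) (2 * m)).length % 2 = 0 := by simp [length_play]
    rw [play_succ_of_even (by omega), claimedII_concat_of_even hlen, claimedI_concat_of_even hlen,
      claimedII_play_mirrorStrategy hσ hfree hI m (by omega), hσ.leftInverse.image_image]
    exact Set.subset_insert _ _

theorem not_PIWin_of_involutive_of_forall_ne (ℒ : Set (Finset X)) (hauto : IsGameAuto ℒ σ)
    (hσ : Function.Involutive σ) (hfree : ∀ x, σ x ≠ x) : ¬ PIWin ℒ :=
  not_PIWin_of_image_claimedII_subset ℒ hauto (validStrategy_mirrorStrategy σ)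
    fun _ hI _ hk => image_claimedII_play_mirrorStrategy_subset hσ hfree hI hk

end Mirror

section Automorphisms

variable {X : Type*} [DecidableEq X]

def autGroup (ℒ : Set (Finset X)) : Subgroup (Perm X) where
  carrier := {g | IsGameAuto ℒ g}
  one_mem' L := by rw [Perm.coe_one, Finset.image_id]
  mul_mem' {g h} hg hh L := by
    rw [Perm.coe_mul, ← Finset.image_image]
    exact (hh L).trans (hg _)
  inv_mem' {g} hg L := by
    have hL : (L.image ⇑g⁻¹).image g = L := by simp [Finset.image_image]
    simpa only [hL] using (hg (L.image ⇑g⁻¹)).symm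

theorem TransitiveGame.isPretransitive {ℒ : Set (Finset X)} (htrans : TransitiveGame ℒ) :
    IsPretransitive (autGroup ℒ) X :=
  ⟨fun x y => let ⟨g, hg, hgx⟩ := htrans x y; ⟨⟨g, hg⟩, hgx⟩⟩

end Automorphisms

/-- For every natural number `a`, no transitive avoidance game on a board of `2^a`
points is a Player I win. -/
theorem statement1 (a : ℕ) (ℒ : Set (Finset (Fin (2 ^ a))))
    (htrans : TransitiveGame ℒ) : ¬ PIWin ℒ := by
  rcases Nat.eq_zero_or_pos a with rfl | ha
  · exact not_PIWin_of_card_le_one ℒ (by simp)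
  have := htrans.isPretransitive
  obtain ⟨σ, horder, hfree⟩ := exists_orderOf_eq_prime_forall_smul_ne_of_card_eq_prime_pow
    (G := autGroup ℒ) (p := 2) (Nat.card_fin _) ha.ne'
  have hσ2 := pow_orderOf_eq_one σ
  rw [horder] at hσ2
  have hσ : Function.Involutive (σ : Perm (Fin (2 ^ a))) := fun x => by
    rw [← Perm.mul_apply, ← sq, ← Subgroup.coe_pow, hσ2]
    rfl
  exact not_PIWin_of_involutive_of_forall_ne ℒ σ.2 hσ hfree
end

section
/- If n is even and there exists an Isbell family on an n-point set, then there exists a transitive avoidance game on a board of n points that is a Player I win. -/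
/-- An Isbell family on a finite set `X`: an up-set containing exactly one of each
complementary pair of subsets, whose automorphism group acts transitively on `X`. -/
def IsIsbell {X : Type*} [Fintype X] [DecidableEq X] (F : Set (Finset X)) : Prop :=
  (∀ A B : Finset X, A ∈ F → A ⊆ B → B ∈ F) ∧
  (∀ S : Finset X, Xor' (S ∈ F) (Sᶜ ∈ F)) ∧
  (∀ x y : X, ∃ g : Equiv.Perm X, (∀ A : Finset X, A ∈ F ↔ A.image g ∈ F) ∧ g x = y)

/-!
Take the lines to be the Isbell family `F` itself. When the board, of even size, is full, Player I
holds some `C` and Player II holds `Cᶜ`; exactly one of the two lies in `F`, and as `F` is an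
up-set, Player I has won iff `C ∉ F`. So only the final position matters, and Player I can force
`C ∉ F` by strategy stealing, proved by simultaneous induction on the number of free points:
a point handed to the opponent in advance never helps him, and with an even number of free points,
if the player to move loses holding `C` against `D`, then he wins holding `D` against `C`. At the
start both hold `∅`, so this swap changes nothing and Player I cannot lose.
-/

namespace AvoidanceGame

section History

variable {X : Type*}

theorem claimedI_cons (a : X) (l : List X) : claimedI (a :: l) = insert a (claimedII l) := by
  ext x
  simp only [claimedI, claimedII, Set.mem_ofPred_eq, Set.mem_insert_iff]
  constructor
  · rintro ⟨_ | i, hi, hx⟩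
    · exact Or.inl (Option.some.inj hx).symm
    · exact Or.inr ⟨i, by omega, hx⟩
  · rintro (rfl | ⟨i, hi, hx⟩)
    · exact ⟨0, rfl, rfl⟩
    · exact ⟨i + 1, by omega, hx⟩

theorem claimedII_cons (a : X) (l : List X) : claimedII (a :: l) = claimedI l := by
  ext x
  simp only [claimedI, claimedII, Set.mem_ofPred_eq]
  constructor
  · rintro ⟨_ | i, hi, hx⟩
    · simp at hi
    · exact ⟨i, by omega, hx⟩
  · rintro ⟨i, hi, hx⟩
    exact ⟨i + 1, by omega, hx⟩

theorem length_play (sI sII : Strategy X) (k : ℕ) : (play sI sII k).length = k := by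
  induction k with
  | zero => rfl
  | succ k ih => simp [play, ih]

theorem play_two_mul_add_two (sI sII : Strategy X) (j : ℕ) :
    play sI sII (2 * j + 2) =
      play sI sII (2 * j) ++ [sI (play sI sII (2 * j)),
        sII (play sI sII (2 * j) ++ [sI (play sI sII (2 * j))])] := by
  simp [play, Nat.add_mod]

variable [DecidableEq X]

def claimedSets : List X → Finset X × Finset X
  | [] => (∅, ∅)
  | a :: l => (insert a (claimedSets l).2, (claimedSets l).1)

theorem coe_claimedSets (l : List X) :
    ↑(claimedSets l).1 = claimedI l ∧ ↑(claimedSets l).2 = claimedII l := by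
  induction l with
  | nil => simp [claimedSets, claimedI, claimedII]
  | cons a l ih => simp [claimedSets, claimedI_cons, claimedII_cons, ih]

theorem claimedSets_union (l : List X) :
    (claimedSets l).1 ∪ (claimedSets l).2 = l.toFinset := by
  induction l with
  | nil => rfl
  | cons a l ih => simp [claimedSets, ← ih, Finset.union_comm]

theorem claimedSets_append_singleton (l : List X) (a : X) :
    claimedSets (l ++ [a]) = if Even l.length
      then (insert a (claimedSets l).1, (claimedSets l).2)
      else ((claimedSets l).1, insert a (claimedSets l).2) := by
  induction l with
  | nil => rfl
  | cons c l ih =>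
    by_cases hl : Even l.length <;>
      simp [claimedSets, ih, hl, Nat.even_add_one, Finset.insert_comm]

theorem claimedSets_append_pair (l : List X) (hl : Even l.length) (a b : X) :
    claimedSets (l ++ [a, b]) = (insert a (claimedSets l).1, insert b (claimedSets l).2) := by
  rw [show l ++ [a, b] = l ++ [a] ++ [b] by simp, claimedSets_append_singleton,
    claimedSets_append_singleton]
  simp [hl, Nat.even_add_one]

end History

section Strategies

variable {X : Type*}

noncomputable def strategyPreferring [Nonempty X] (P : List X → X → Prop) : Strategy X :=
  fun h => Classical.epsilon fun x => x ∉ h ∧ (P h x ∨ ∀ y ∉ h, ¬ P h y)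

theorem strategyPreferring_spec [Nonempty X] (P : List X → X → Prop) {h : List X}
    (hfree : ∃ x, x ∉ h) :
    strategyPreferring P h ∉ h ∧
      (P h (strategyPreferring P h) ∨ ∀ y ∉ h, ¬ P h y) := by
  refine Classical.epsilon_spec (p := fun x => x ∉ h ∧ (P h x ∨ ∀ y ∉ h, ¬ P h y)) ?_
  by_cases hP : ∃ y ∉ h, P h y
  · obtain ⟨y, hy, hPy⟩ := hP
    exact ⟨y, hy, Or.inl hPy⟩
  · obtain ⟨x, hx⟩ := hfree
    exact ⟨x, hx, Or.inr (by simpa using hP)⟩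

theorem strategyPreferring_of_exists [Nonempty X] (P : List X → X → Prop) {h : List X}
    (hP : ∃ x ∉ h, P h x) :
    strategyPreferring P h ∉ h ∧ P h (strategyPreferring P h) := by
  obtain ⟨x, hx, hPx⟩ := hP
  obtain ⟨hfree, hpref⟩ := strategyPreferring_spec P ⟨x, hx⟩
  exact ⟨hfree, hpref.resolve_right fun hnone => hnone x hx hPx⟩

theorem validStrategy_strategyPreferring [Fintype X] [Nonempty X] (P : List X → X → Prop) :
    ValidStrategy (strategyPreferring P) := fun h _ hlen =>
  (strategyPreferring_spec P (Cardinal.exists_notMem_of_length_lt h (by simpa using hlen))).1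

end Strategies

section FinalPositionGame

variable {X : Type*} [Fintype X] [DecidableEq X] (F : Set (Finset X))

/-- The player to move holds `C`, the opponent holds `D`, and `k` moves remain: `MoverWins F k C D`
says that the player to move can force the set of the player on move after these `k` moves (for
even `k`, himself) to lie outside `F`. -/
def MoverWins : ℕ → Finset X → Finset X → Prop
  | 0, C, _ => C ∉ F
  | k + 1, C, D => ∃ x ∉ C ∪ D, ¬ MoverWins k D (insert x C)

def SwapWins (u : ℕ) : Prop :=
  ∀ C D : Finset X, Disjoint C D → (C ∪ D)ᶜ.card = u →
    ¬ MoverWins F u C D → MoverWins F u D C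

def ExtraPointWins (u : ℕ) : Prop :=
  ∀ (C D : Finset X) (p : X), Disjoint C D → p ∉ C ∪ D → (C ∪ D)ᶜ.card = u + 1 →
    MoverWins F u C (insert p D) → MoverWins F (u + 1) C D

omit [Fintype X] in
theorem disjoint_insert_insert {C D : Finset X} {x y : X} (hCD : Disjoint C D)
    (hx : x ∉ C ∪ D) (hy : y ∉ C ∪ D) (hxy : x ≠ y) :
    Disjoint (insert x C) (insert y D) := by
  simp_all [Finset.disjoint_insert_left, Finset.disjoint_insert_right, eq_comm]

theorem card_compl_insert_union_insert {C D : Finset X} {x y : X}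
    (hx : x ∉ C ∪ D) (hy : y ∉ C ∪ D) (hxy : x ≠ y) :
    (insert x C ∪ insert y D)ᶜ.card + 2 = (C ∪ D)ᶜ.card := by
  have hunion : insert x C ∪ insert y D = insert x (insert y (C ∪ D)) := by
    ext; simp only [Finset.mem_union, Finset.mem_insert]; tauto
  have hcard : (insert x (insert y (C ∪ D))).card = (C ∪ D).card + 2 := by
    rw [Finset.card_insert_of_notMem (by simp_all), Finset.card_insert_of_notMem hy]
  have := Finset.card_le_univ (insert x (insert y (C ∪ D)))
  rw [Finset.card_compl, Finset.card_compl, hunion, hcard]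
  omega

theorem swapWins_zero (hF : ∀ S ∈ F, Sᶜ ∉ F) : SwapWins F 0 := by
  intro C D hCD hfull hC
  rw [Finset.card_eq_zero, Finset.compl_eq_empty_iff] at hfull
  have hD : Cᶜ = D := IsCompl.compl_eq ⟨hCD, codisjoint_iff.mpr hfull⟩
  exact hD ▸ hF C (not_not.mp hC)

theorem swapWins_succ {u : ℕ} (hextra : ExtraPointWins F u) : SwapWins F (u + 1) := by
  intro C D hCD hfree hlose
  obtain ⟨y, hy⟩ := Finset.card_pos.mp (hfree ▸ u.succ_pos : 0 < (C ∪ D)ᶜ.card)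
  rw [Finset.mem_compl] at hy
  by_contra hwin
  refine hlose (hextra C D y hCD hy hfree ?_)
  by_contra hlose'
  exact hwin ⟨y, by rwa [Finset.union_comm], hlose'⟩

/-- Strategy stealing: pretend the free point `p` already belongs to the opponent. If the
opponent actually claims `p`, the holdings are now as in the imagined game but with the other
player to move, which is where `SwapWins` enters. -/
theorem extraPointWins_succ {u : ℕ} (hswap : SwapWins F u)
    (hprev : ∀ v, u = v + 1 → ExtraPointWins F v) : ExtraPointWins F (u + 1) := by
  rintro C D p hCD hp hfree ⟨x, hx, hlose⟩
  have hxp : x ≠ p := by rintro rfl; simp at hx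
  have hxCD : x ∉ C ∪ D := by simp_all
  refine ⟨x, hxCD, ?_⟩
  rintro ⟨y, hy, hwin⟩
  have hyx : y ≠ x := by rintro rfl; simp at hy
  have hyCD : y ∉ C ∪ D := by simp_all
  have hCD' : Disjoint (insert x C) (insert y D) := disjoint_insert_insert hCD hxCD hyCD hyx.symm
  have hfree' : (insert x C ∪ insert y D)ᶜ.card = u := by
    have := card_compl_insert_union_insert hxCD hyCD hyx.symm
    omega
  apply hwin
  rcases eq_or_ne y p with rfl | hyp
  · exact hswap _ _ hCD'.symm (by rwa [Finset.union_comm]) hlose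
  · have hpfree : p ∉ insert x C ∪ insert y D := by simp_all [eq_comm]
    obtain ⟨v, rfl⟩ : ∃ v, u = v + 1 := Nat.exists_eq_add_one.mpr
      (hfree' ▸ Finset.card_pos.mpr ⟨p, Finset.mem_compl.mpr hpfree⟩)
    refine hprev v rfl _ _ p hCD' hpfree hfree' ?_
    rw [Finset.insert_comm]
    by_contra hlose'
    exact hlose ⟨y, by simp_all [eq_comm], hlose'⟩

theorem extraPointWins_two_mul_add_one (hF : ∀ S ∈ F, Sᶜ ∉ F) :
    ∀ m, ExtraPointWins F (2 * m + 1)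
  | 0 => extraPointWins_succ F (swapWins_zero F hF) (by omega)
  | m + 1 => extraPointWins_succ F (swapWins_succ F (extraPointWins_two_mul_add_one hF m))
      fun v hv => (by omega : v = 2 * m + 1) ▸ extraPointWins_two_mul_add_one hF m

theorem swapWins_two_mul (hF : ∀ S ∈ F, Sᶜ ∉ F) : ∀ m, SwapWins F (2 * m)
  | 0 => swapWins_zero F hF
  | m + 1 => swapWins_succ F (extraPointWins_two_mul_add_one F hF m)

theorem moverWins_empty_empty (hF : ∀ S ∈ F, Sᶜ ∉ F) (heven : Even (Fintype.card X)) :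
    MoverWins F (Fintype.card X) ∅ ∅ := by
  obtain ⟨m, hm⟩ := heven
  rw [hm, ← two_mul]
  by_contra hlose
  exact hlose (swapWins_two_mul F hF m ∅ ∅ (Finset.disjoint_empty_left _)
    (by simp [hm, two_mul]) hlose)

end FinalPositionGame

section Play

variable {X : Type*} [Fintype X] [DecidableEq X] [Nonempty X] (F : Set (Finset X))

noncomputable def moverStrategy : Strategy X :=
  strategyPreferring fun h x =>
    ¬ MoverWins F (Fintype.card X - h.length - 1) (claimedSets h).2 (insert x (claimedSets h).1)

theorem moverStrategy_round {h : List X} (heven : Even h.length) {r : ℕ}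
    (hr : h.length + r + 2 = Fintype.card X)
    (hwin : MoverWins F (r + 2) (claimedSets h).1 (claimedSets h).2) :
    moverStrategy F h ∉ h ∧ ∀ b ∉ h ++ [moverStrategy F h],
      MoverWins F r (claimedSets (h ++ [moverStrategy F h, b])).1
        (claimedSets (h ++ [moverStrategy F h, b])).2 := by
  have hmem : ∀ z, z ∈ h ↔ z ∈ (claimedSets h).1 ∨ z ∈ (claimedSets h).2 := by
    simp [← Finset.mem_union, claimedSets_union]
  have hfuel : Fintype.card X - h.length - 1 = r + 1 := by omega
  obtain ⟨x, hx, hlose⟩ := hwin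
  obtain ⟨hfree, hpick⟩ : moverStrategy F h ∉ h ∧ ¬ MoverWins F (r + 1) (claimedSets h).2
      (insert (moverStrategy F h) (claimedSets h).1) := by
    rw [← hfuel]
    exact strategyPreferring_of_exists _ ⟨x, by simpa [hmem] using hx, by rwa [hfuel]⟩
  refine ⟨hfree, fun b hb => ?_⟩
  rw [claimedSets_append_pair h heven]
  by_contra hlose'
  refine hpick ⟨b, ?_, hlose'⟩
  simp only [List.mem_append, List.mem_singleton, hmem] at hb
  simp only [Finset.mem_union, Finset.mem_insert]
  tauto

theorem moverStrategy_invariant (hstart : MoverWins F (Fintype.card X) ∅ ∅)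
    {sII : Strategy X} (hsII : ValidStrategy sII) (j : ℕ) (hj : 2 * j ≤ Fintype.card X) :
    (play (moverStrategy F) sII (2 * j)).Nodup ∧
      MoverWins F (Fintype.card X - 2 * j) (claimedSets (play (moverStrategy F) sII (2 * j))).1
        (claimedSets (play (moverStrategy F) sII (2 * j))).2 := by
  induction j with
  | zero => exact ⟨List.nodup_nil, hstart⟩
  | succ j ih =>
    obtain ⟨hnd, hwin⟩ := ih (by omega)
    set h := play (moverStrategy F) sII (2 * j)
    have hlen : h.length = 2 * j := length_play _ _ _
    rw [show 2 * (j + 1) = 2 * j + 2 by ring, play_two_mul_add_two]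
    rw [show Fintype.card X - 2 * j = Fintype.card X - 2 * j - 2 + 2 by omega] at hwin
    obtain ⟨ha, hround⟩ := moverStrategy_round F (h := h) (by simp [hlen]) (by omega) hwin
    have hnda : (h ++ [moverStrategy F h]).Nodup := by simpa using hnd.concat ha
    have hb := hsII _ hnda (by simp [hlen]; omega)
    refine ⟨by simpa using hnda.concat hb, ?_⟩
    rw [show Fintype.card X - (2 * j + 2) = Fintype.card X - 2 * j - 2 by omega]
    exact hround _ hb

end Play

theorem piWin_of_isUpperSet_of_xor {X : Type*} [Fintype X] [DecidableEq X] {F : Set (Finset X)}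
    (hup : IsUpperSet F) (hxor : ∀ S : Finset X, Xor (S ∈ F) (Sᶜ ∈ F))
    (heven : Even (Fintype.card X)) : PIWin F := by
  have : Nonempty X := by
    by_contra hX
    rw [not_nonempty_iff] at hX
    simpa [Finset.univ_eq_empty] using hxor ∅
  have hF : ∀ S ∈ F, Sᶜ ∉ F := fun S hS hSc => (hxor S).elim (·.2 hSc) (·.2 hS)
  obtain ⟨m, hm⟩ := heven
  refine ⟨moverStrategy F, validStrategy_strategyPreferring _, fun sII hsII => ?_⟩
  obtain ⟨hnd, hlose⟩ :=
    moverStrategy_invariant F (moverWins_empty_empty F hF ⟨m, hm⟩) hsII m (by omega)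
  set h := play (moverStrategy F) sII (2 * m)
  rw [show Fintype.card X - 2 * m = 0 by omega] at hlose
  have hfull : (claimedSets h).1 ∪ (claimedSets h).2 = Finset.univ := by
    rw [claimedSets_union, ← Finset.card_eq_iff_eq_univ, List.toFinset_card_of_nodup hnd,
      length_play]
    omega
  have hD : (claimedSets h).2 ∈ F :=
    hup (codisjoint_iff_compl_le_right.mp (codisjoint_iff.mpr hfull))
      ((hxor _).elim (absurd ·.1 hlose) (·.1))
  refine ⟨2 * m, by omega, ⟨_, hD, (coe_claimedSets h).2.le⟩, ?_⟩
  rintro ⟨L, hL, hLC⟩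
  rw [← (coe_claimedSets h).1, Finset.coe_subset] at hLC
  exact hlose (hup hLC hL)

end AvoidanceGame

/-- If `n` is even and there exists an Isbell family on an `n`-point set, then there is
a transitive avoidance game on a board of `n` points that is a Player I win. -/
theorem statement5 (n : ℕ) (hn : Even n)
    (hF : ∃ F : Set (Finset (Fin n)), IsIsbell F) :
    ∃ ℒ : Set (Finset (Fin n)), TransitiveGame ℒ ∧ PIWin ℒ := by
  obtain ⟨F, hup, hxor, htrans⟩ := hF
  have hup' : IsUpperSet F := fun A B hAB hA => hup A B hA hAB
  exact ⟨F, htrans,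
    AvoidanceGame.piWin_of_isUpperSet_of_xor hup' hxor (by rwa [Fintype.card_fin])⟩
end

section
/- Let p and q be odd positive integers, and set p' = (p+1)/2 and q' = (q+1)/2. Consider the board Fin q × Fin p, partitioned into the q buckets {i} × Fin p for i ∈ Fin q. If S and T are two subsets of the board such that each of them consists of exactly p' points in each of exactly q' buckets and contains no other points (so each has exactly p'·q' points), then S and T have a common point. -/
/-- Let `p` and `q` be odd positive integers with `p' = (p+1)/2`, `q' = (q+1)/2`.
If each of `S` and `T` consists of exactly `p'` points in each of exactly `q'` of the
buckets `{i} × Fin p` of the board `Fin q × Fin p` (and no other points), then `S` and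
`T` have a common point. -/
theorem statement13 (p q : ℕ) (hp0 : 0 < p) (hq0 : 0 < q) (hp : Odd p) (hq : Odd q)
    (S T : Finset (Fin q × Fin p))
    (hS : ∃ Q : Finset (Fin q), Q.card = (q + 1) / 2 ∧
      (∀ i ∈ Q, (S.filter (fun z => z.1 = i)).card = (p + 1) / 2) ∧
      (∀ i ∉ Q, S.filter (fun z => z.1 = i) = ∅))
    (hT : ∃ Q : Finset (Fin q), Q.card = (q + 1) / 2 ∧
      (∀ i ∈ Q, (T.filter (fun z => z.1 = i)).card = (p + 1) / 2) ∧
      (∀ i ∉ Q, T.filter (fun z => z.1 = i) = ∅)) :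
    (S ∩ T).Nonempty := by
  obtain ⟨QS, hQSc, hSin, _⟩ := hS
  obtain ⟨QT, hQTc, hTin, _⟩ := hT
  obtain ⟨k, hk⟩ := hq
  have hQ : (QS ∩ QT).Nonempty := by
    rw [← Finset.card_pos]
    have h1 := Finset.card_union_add_card_inter QS QT
    have h2 : (QS ∪ QT).card ≤ q := by
      have := Finset.card_le_card (Finset.subset_univ (QS ∪ QT))
      simpa using this
    omega
  obtain ⟨i, hi⟩ := hQ
  rw [Finset.mem_inter] at hi
  set A := S.filter (fun z => z.1 = i) with hA'
  set B := T.filter (fun z => z.1 = i) with hB'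
  have hAB : (A ∩ B).Nonempty := by
    rw [← Finset.card_pos]
    have h1 := Finset.card_union_add_card_inter A B
    have h2 : (A ∪ B).card ≤ p := by
      have hsub : A ∪ B ⊆ Finset.univ.filter (fun z : Fin q × Fin p => z.1 = i) := by
        intro z hz
        rw [Finset.mem_union] at hz
        simp only [hA', hB', Finset.mem_filter] at hz ⊢
        refine ⟨Finset.mem_univ _, ?_⟩
        tauto
      have hle := Finset.card_le_card hsub
      have hcard : (Finset.univ.filter (fun z : Fin q × Fin p => z.1 = i)).card = p := by
        have : Finset.univ.filter (fun z : Fin q × Fin p => z.1 = i)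
            = {i} ×ˢ (Finset.univ : Finset (Fin p)) := by
          ext z; simp [Prod.ext_iff, eq_comm]
        rw [this, Finset.card_product]
        simp
      omega
    have hAc := hSin i hi.1
    have hBc := hTin i hi.2
    rw [← hA'] at hAc
    rw [← hB'] at hBc
    obtain ⟨m, hm⟩ := hp
    omega
  obtain ⟨z, hz⟩ := hAB
  rw [Finset.mem_inter, hA', hB', Finset.mem_filter, Finset.mem_filter] at hz
  exact ⟨z, Finset.mem_inter.2 ⟨hz.1.1, hz.2.1⟩⟩
end

section
/- Let m = 2^a for some a ≥ 1 and let A be a partial cyclic pair set in ℤ/m. Then A has exactly one maximal point. -/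
/-- Lexicographic comparison of sets of naturals: `S ≤ T` iff `S = T` or the least
element of the symmetric difference `S Δ T` lies in `T`. -/
def LexLE (S T : Set ℕ) : Prop :=
  S = T ∨ ∃ i : ℕ, i ∈ T ∧ i ∉ S ∧ ∀ j < i, (j ∈ S ↔ j ∈ T)

/-- The restriction `A|_[x,x+r)` of `A ⊆ ℤ/m` to the length-`r` interval starting
at `x`, viewed as a subset of `{0, …, r−1}`. -/
def restrictSet (m : ℕ) (A : Set (ZMod m)) (x : ZMod m) (r : ℕ) : Set ℕ :=
  { i | i < r ∧ x + (i : ZMod m) ∈ A }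

/-- `x` is an `r`-maximal point of `A`: `A|_[x,x+r)` is lexicographically maximal
among all `A|_[y,y+r)`.  A point is maximal when it is `m`-maximal. -/
def IsMaxPt (m : ℕ) (A : Set (ZMod m)) (r : ℕ) (x : ZMod m) : Prop :=
  ∀ y : ZMod m, LexLE (restrictSet m A y r) (restrictSet m A x r)

/-- `x` is an `r`-minimal point of `A`: `A|_[x,x+r)` is lexicographically minimal
among all `A|_[y,y+r)`. -/
def IsMinPt (m : ℕ) (A : Set (ZMod m)) (r : ℕ) (x : ZMod m) : Prop :=
  ∀ y : ZMod m, LexLE (restrictSet m A x r) (restrictSet m A y r)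

/-- The opposite point of `x` in `ℤ/m` (for `m` even): `x + m/2`. -/
def Opp (m : ℕ) (x : ZMod m) : ZMod m := x + ((m / 2 : ℕ) : ZMod m)

/-- A (full cyclic) pair set: a subset of `ℤ/m` containing exactly one point of each
opposite pair `{x, x + m/2}`. -/
def IsPairSet (m : ℕ) (A : Set (ZMod m)) : Prop :=
  ∀ x : ZMod m, Xor' (x ∈ A) (Opp m x ∈ A)

/-- A partial cyclic pair set: a nonempty subset of `ℤ/m` containing at most one point
of each opposite pair. -/
def IsPartialPairSet (m : ℕ) (A : Set (ZMod m)) : Prop :=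
  A.Nonempty ∧ ∀ x : ZMod m, ¬(x ∈ A ∧ Opp m x ∈ A)

/-- A free point of a partial cyclic pair set `A`: neither it nor its opposite point
belongs to `A`. -/
def IsFreePt (m : ℕ) (A : Set (ZMod m)) (x : ZMod m) : Prop :=
  x ∉ A ∧ Opp m x ∉ A

/-!
Ordering the restrictions `A|_[y,y+m)` lexicographically, a maximal point exists because `ℤ/m`
is finite. Two maximal points `x ≠ y` see the same restriction, so `A` is periodic with period
`x - y ≠ 0`. In `ℤ/2^a` every nonzero element has a multiple equal to `2^(a-1) = m/2`, so `A`
would also be invariant under `z ↦ z + m/2`, which a nonempty partial pair set cannot be.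
-/

open Classical in
noncomputable def lexKey (S : Set ℕ) : Lex (ℕ → Bool) := toLex fun i => decide (i ∈ S)

lemma lexKey_injective : Function.Injective lexKey := by
  intro S T h
  ext i
  simpa [lexKey] using congrFun h i

lemma lexLE_iff_lexKey_le {S T : Set ℕ} : LexLE S T ↔ lexKey S ≤ lexKey T := by
  rw [le_iff_eq_or_lt, lexKey_injective.eq_iff, LexLE]
  refine or_congr_right ?_
  show _ ↔ Pi.Lex (· < ·) (· < ·) _ _
  simp only [Pi.Lex, lexKey, Pi.toLex_apply, Bool.lt_iff, decide_eq_false_iff_not,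
    decide_eq_true_iff, decide_eq_decide]
  exact ⟨fun ⟨i, hT, hS, h⟩ => ⟨i, h, hS, hT⟩, fun ⟨i, h, hS, hT⟩ => ⟨i, hT, hS, h⟩⟩

lemma periodic_of_restrictSet_eq {m : ℕ} [NeZero m] {A : Set (ZMod m)} {x y : ZMod m}
    (h : restrictSet m A x m = restrictSet m A y m) : Function.Periodic (· ∈ A) (x - y) := by
  intro z
  have := congrArg ((z - y).val ∈ ·) h
  simpa [restrictSet, ZMod.val_lt, add_sub_left_comm x z y] using this

lemma IsPartialPairSet.not_periodic_opp {m : ℕ} {A : Set (ZMod m)} (hA : IsPartialPairSet m A) :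
    ¬Function.Periodic (· ∈ A) ((m / 2 : ℕ) : ZMod m) := by
  intro h
  obtain ⟨z, hz⟩ := hA.1
  exact hA.2 z ⟨hz, cast (h z).symm hz⟩

lemma ZMod.exists_mul_eq_half_of_ne_zero {a : ℕ} {d : ZMod (2 ^ a)} (hd : d ≠ 0) :
    ∃ c : ZMod (2 ^ a), c * d = ((2 ^ a / 2 : ℕ) : ZMod (2 ^ a)) := by
  obtain ⟨i, hia, hi⟩ := (Nat.dvd_prime_pow Nat.prime_two).1 (Nat.gcd_dvd_right d.val (2 ^ a))
  have hlt : i < a := by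
    refine hia.lt_of_ne fun hia_eq => ?_
    have := Nat.gcd_dvd_left d.val (2 ^ a)
    rw [hi, hia_eq] at this
    exact hd ((ZMod.val_eq_zero d).1 (Nat.eq_zero_of_dvd_of_lt this (ZMod.val_lt d)))
  have hhalf : 2 ^ a / 2 = 2 ^ i * 2 ^ (a - 1 - i) := by
    obtain ⟨k, rfl⟩ : ∃ k, a = i + k + 1 := ⟨a - 1 - i, by omega⟩
    rw [pow_succ, Nat.mul_div_cancel _ two_pos, pow_add, show i + k + 1 - 1 - i = k by omega]
  -- `d * d⁻¹` is the gcd `2 ^ i` of `d.val` and `2 ^ a`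
  refine ⟨d⁻¹ * 2 ^ (a - 1 - i), ?_⟩
  rw [hhalf, Nat.cast_mul, ← hi, ← ZMod.mul_inv_eq_gcd]
  push_cast
  ring

lemma Function.Periodic.half_of_ne_zero {α : Type*} {a : ℕ} {f : ZMod (2 ^ a) → α}
    {d : ZMod (2 ^ a)} (h : Function.Periodic f d) (hd : d ≠ 0) :
    Function.Periodic f ((2 ^ a / 2 : ℕ) : ZMod (2 ^ a)) := by
  obtain ⟨c, hc⟩ := ZMod.exists_mul_eq_half_of_ne_zero hd
  simpa [ZMod.natCast_zmod_val, hc] using h.nat_mul c.val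

theorem statement14_general (a : ℕ) (A : Set (ZMod (2 ^ a)))
    (hA : IsPartialPairSet (2 ^ a) A) :
    ∃! x : ZMod (2 ^ a), IsMaxPt (2 ^ a) A (2 ^ a) x := by
  obtain ⟨x, hx⟩ := Finite.exists_max fun y => lexKey (restrictSet (2 ^ a) A y (2 ^ a))
  refine ⟨x, fun y => lexLE_iff_lexKey_le.2 (hx y), fun y hy => ?_⟩
  have hxy : restrictSet (2 ^ a) A y (2 ^ a) = restrictSet (2 ^ a) A x (2 ^ a) :=
    lexKey_injective ((hx y).antisymm (lexLE_iff_lexKey_le.1 (hy x)))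
  by_contra hyx
  exact hA.not_periodic_opp ((periodic_of_restrictSet_eq hxy).half_of_ne_zero (sub_ne_zero.2 hyx))

/-- Let `m = 2^a` for some `a ≥ 1` and let `A` be a partial cyclic pair set in `ℤ/m`.
Then `A` has exactly one maximal point. -/
theorem statement14 (a : ℕ) (ha : 1 ≤ a) (A : Set (ZMod (2 ^ a)))
    (hA : IsPartialPairSet (2 ^ a) A) :
    ∃! x : ZMod (2 ^ a), IsMaxPt (2 ^ a) A (2 ^ a) x :=
  statement14_general a A hA
end

section
/- Let m = 2^a for some a ≥ 1, let A be a partial cyclic pair set in ℤ/m, and let x be the maximal point of A. Then for every integer r with 1 ≤ r ≤ m − 1, the point x − r is not an r-maximal point of A. -/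
/-! Compare the length-`m` windows of `A` at `x - r` and at `x`; by maximality of `x` the
second is at least the first.  If they are equal, `A` is invariant under translation by `r`,
hence by the subgroup of `ℤ/2^a` generated by `r`; since `0 < r < 2^a` that subgroup contains
`2^(a-1) = m/2`, so `A` would contain a point together with its opposite.  Otherwise, up to
the first difference `i` the set `A` read from `x - r` is `r`-periodic, so the `r`-window
starting at the last multiple of `r` not exceeding `i + r` beats the `r`-window at `x - r`. -/

open Pointwise

theorem mem_restrictSet_iff {m r j : ℕ} {A : Set (ZMod m)} {x : ZMod m} (hj : j < r) :
    j ∈ restrictSet m A x r ↔ x + (j : ZMod m) ∈ A :=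
  and_iff_right hj

theorem not_lexLE_of_mem_of_notMem {S T : Set ℕ} {i : ℕ} (hS : i ∈ S) (hT : i ∉ T)
    (hbelow : ∀ j < i, (j ∈ S ↔ j ∈ T)) : ¬ LexLE S T := by
  rintro (rfl | ⟨k, hkT, hkS, hbelow'⟩)
  · exact hT hS
  · rcases lt_trichotomy i k with hik | rfl | hki
    · exact hT ((hbelow' i hik).mp hS)
    · exact hkS hS
    · exact hkS ((hbelow k hki).mpr hkT)

theorem iff_mod_of_iff_add {p : ℕ → Prop} {r i : ℕ} (hr : 0 < r)
    (h : ∀ j < i, (p j ↔ p (j + r))) : ∀ j < i + r, (p j ↔ p (j % r)) := by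
  intro j
  induction j using Nat.strong_induction_on with
  | _ j ih =>
    intro hj
    rcases lt_or_ge j r with hjr | hrj
    · rw [Nat.mod_eq_of_lt hjr]
    · obtain ⟨k, rfl⟩ := Nat.exists_eq_add_of_le' hrj
      rw [Nat.add_mod_right]
      exact (h k (by omega)).symm.trans (ih k (by omega) (by omega))

theorem not_isMaxPt_of_shift {m : ℕ} {A : Set (ZMod m)} {y : ZMod m} {r i : ℕ} (hr : 0 < r)
    (hshift : y + ((i + r : ℕ) : ZMod m) ∈ A) (hnot : y + (i : ZMod m) ∉ A)
    (hbelow : ∀ j < i, (y + (j : ZMod m) ∈ A ↔ y + ((j + r : ℕ) : ZMod m) ∈ A)) :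
    ¬ IsMaxPt m A r y := by
  have hper := iff_mod_of_iff_add (p := fun j ↦ y + (j : ZMod m) ∈ A) hr hbelow
  set q := r * (i / r + 1)
  have hq : q + i % r = i + r := by
    simp only [q]; rw [Nat.mul_add, Nat.mul_one, Nat.add_right_comm, Nat.div_add_mod]
  have hcast : ∀ j : ℕ, y + (q : ZMod m) + (j : ZMod m) = y + ((q + j : ℕ) : ZMod m) := by
    intro j; push_cast; ring
  intro hmax
  refine not_lexLE_of_mem_of_notMem (i := i % r) ?_ ?_ ?_ (hmax (y + q))
  · exact ⟨Nat.mod_lt i hr, by rwa [hcast, hq]⟩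
  · exact fun ⟨_, h⟩ ↦ hnot ((hper i (by omega)).mpr h)
  · intro j hj
    have hjr : j < r := hj.trans (Nat.mod_lt i hr)
    have hjq : (q + j) % r = j := by
      rw [Nat.mul_add_mod, Nat.mod_eq_of_lt hjr]
    rw [mem_restrictSet_iff hjr, mem_restrictSet_iff hjr, hcast, hper (q + j) (by omega), hjq]

theorem sub_mem_stabilizer_of_restrictSet_eq {m : ℕ} [NeZero m] {A : Set (ZMod m)} {x y : ZMod m}
    (h : restrictSet m A y m = restrictSet m A x m) : y - x ∈ AddAction.stabilizer (ZMod m) A := by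
  rw [AddAction.mem_stabilizer_iff]
  ext z
  obtain ⟨j, hj, rfl⟩ : ∃ j : ℕ, j < m ∧ y + (j : ZMod m) = z :=
    ⟨(z - y).val, ZMod.val_lt _, by rw [ZMod.natCast_zmod_val]; ring⟩
  have htranslate : -(y - x) + (y + (j : ZMod m)) = x + j := by ring
  rw [Set.mem_vadd_set_iff_neg_vadd_mem, vadd_eq_add, htranslate, ← mem_restrictSet_iff hj,
    ← mem_restrictSet_iff hj, h]

theorem natCast_gcd_mem_zmultiples (r n : ℕ) :
    ((r.gcd n : ℕ) : ZMod n) ∈ AddSubgroup.zmultiples (r : ZMod n) := by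
  rw [AddSubgroup.mem_zmultiples_iff]
  refine ⟨r.gcdA n, ?_⟩
  have h := congrArg (Int.cast : ℤ → ZMod n) (Nat.gcd_eq_gcd_ab r n)
  push_cast [ZMod.natCast_self] at h
  rw [zsmul_eq_mul, h, zero_mul, add_zero, mul_comm]

theorem natCast_two_pow_pred_mem_zmultiples {a r : ℕ} (hr : 0 < r) (hra : r < 2 ^ a) :
    ((2 ^ (a - 1) : ℕ) : ZMod (2 ^ a)) ∈ AddSubgroup.zmultiples (r : ZMod (2 ^ a)) := by
  obtain ⟨k, hka, hk⟩ := (Nat.dvd_prime_pow Nat.prime_two).mp (Nat.gcd_dvd_right r (2 ^ a))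
  have hka : k < a := by
    refine lt_of_le_of_ne hka fun hka ↦ ?_
    rw [hka] at hk
    have := Nat.le_of_dvd hr (hk ▸ Nat.gcd_dvd_left r (2 ^ a))
    omega
  obtain ⟨c, hc⟩ := Nat.pow_dvd_pow 2 (show k ≤ a - 1 by omega)
  rw [hc, Nat.cast_mul, ← nsmul_eq_mul', ← hk]
  exact AddSubgroup.nsmul_mem _ (natCast_gcd_mem_zmultiples r _) c

theorem IsPartialPairSet.natCast_half_notMem_stabilizer {m : ℕ} {A : Set (ZMod m)}
    (hA : IsPartialPairSet m A) : ((m / 2 : ℕ) : ZMod m) ∉ AddAction.stabilizer (ZMod m) A := by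
  intro h
  obtain ⟨z, hz⟩ := hA.1
  refine hA.2 z ⟨hz, ?_⟩
  rw [AddAction.mem_stabilizer_iff] at h
  rw [Opp, add_comm, ← vadd_eq_add, ← h]
  exact Set.vadd_mem_vadd_set hz

/-- Let `m = 2^a` for some `a ≥ 1`, let `A` be a partial cyclic pair set in `ℤ/m`, and
let `x` be the maximal point of `A`.  Then for every `1 ≤ r ≤ m − 1`, the point
`x − r` is not an `r`-maximal point of `A`. -/
theorem statement16 (a : ℕ) (ha : 1 ≤ a) (A : Set (ZMod (2 ^ a)))
    (hA : IsPartialPairSet (2 ^ a) A) (x : ZMod (2 ^ a))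
    (hx : IsMaxPt (2 ^ a) A (2 ^ a) x)
    (r : ℕ) (hr1 : 1 ≤ r) (hr2 : r ≤ 2 ^ a - 1) :
    ¬ IsMaxPt (2 ^ a) A r (x - (r : ZMod (2 ^ a))) := by
  have hra : r < 2 ^ a := by have := Nat.one_le_two_pow (n := a); omega
  rcases hx (x - r) with heq | ⟨i, ⟨hi, hxi⟩, hyi, hbelow⟩
  · have hr : (r : ZMod (2 ^ a)) ∈ AddAction.stabilizer (ZMod (2 ^ a)) A := by
      simpa using neg_mem (sub_mem_stabilizer_of_restrictSet_eq heq)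
    refine (hA.natCast_half_notMem_stabilizer ?_).elim
    rw [show 2 ^ a / 2 = 2 ^ (a - 1) by simpa using Nat.pow_div ha two_pos]
    exact AddSubgroup.zmultiples_le.mpr hr (natCast_two_pow_pred_mem_zmultiples hr1 hra)
  · refine not_isMaxPt_of_shift hr1 ?_ (fun h ↦ hyi ⟨hi, h⟩) fun j hj ↦ ?_
    · rwa [Nat.cast_add, sub_add_add_cancel]
    · rw [Nat.cast_add, sub_add_add_cancel, ← mem_restrictSet_iff (hj.trans hi),
        ← mem_restrictSet_iff (hj.trans hi)]
      exact hbelow j hj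
end

section
/- Let m = 2^a with a ≥ 2 and m' = m/4, let A be a pair set in ℤ/m, and let x be an m'-maximal point of A. Then the maximal point of A lies in the interval {x − 2m' + 1, …, x} (that is, it equals x − j for some 0 ≤ j < 2m'). -/
lemma lexLE_firstDiff {S T : Set ℕ} (h : LexLE S T) {i : ℕ}
    (hagree : ∀ j < i, (j ∈ S ↔ j ∈ T)) (hdiff : ¬(i ∈ S ↔ i ∈ T)) :
    i ∈ T ∧ i ∉ S := by
  rcases h with rfl | ⟨i0, hT, hS, hb⟩
  · exact absurd Iff.rfl hdiff
  · rcases lt_trichotomy i0 i with h1 | rfl | h1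
    · exact absurd (hagree i0 h1) (by tauto)
    · exact ⟨hT, hS⟩
    · exact absurd (hb i h1) hdiff

lemma lexLE_mono {m : ℕ} {A : Set (ZMod m)} {z w : ZMod m} {r r' : ℕ}
    (hr : r' ≤ r) (h : LexLE (restrictSet m A z r) (restrictSet m A w r)) :
    LexLE (restrictSet m A z r') (restrictSet m A w r') := by
  rcases h with heq | ⟨i, hT, hS, hb⟩
  · left
    ext j
    simp only [restrictSet, Set.mem_setOf_eq]
    have := Set.ext_iff.mp heq j
    simp only [restrictSet, Set.mem_setOf_eq] at this
    constructor
    · rintro ⟨hj, hm⟩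
      exact ⟨hj, (this.mp ⟨lt_of_lt_of_le hj hr, hm⟩).2⟩
    · rintro ⟨hj, hm⟩
      exact ⟨hj, (this.mpr ⟨lt_of_lt_of_le hj hr, hm⟩).2⟩
  · simp only [restrictSet, Set.mem_setOf_eq] at hT hS
    by_cases hi : i < r'
    · right
      refine ⟨i, ⟨hi, hT.2⟩, ?_, ?_⟩
      · rintro ⟨-, hm⟩; exact hS ⟨hT.1, hm⟩
      · intro j hj
        have := hb j hj
        simp only [restrictSet, Set.mem_setOf_eq] at this ⊢
        constructor
        · rintro ⟨hj', hm⟩; exact ⟨hj', (this.mp ⟨lt_of_lt_of_le hj' hr, hm⟩).2⟩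
        · rintro ⟨hj', hm⟩; exact ⟨hj', (this.mpr ⟨lt_of_lt_of_le hj' hr, hm⟩).2⟩
    · left
      ext j
      simp only [restrictSet, Set.mem_setOf_eq]
      constructor
      · rintro ⟨hj, hm⟩
        have := hb j (lt_of_lt_of_le hj (le_of_not_gt hi))
        simp only [restrictSet, Set.mem_setOf_eq] at this
        exact ⟨hj, (this.mp ⟨lt_of_lt_of_le hj hr, hm⟩).2⟩
      · rintro ⟨hj, hm⟩
        have := hb j (lt_of_lt_of_le hj (le_of_not_gt hi))
        simp only [restrictSet, Set.mem_setOf_eq] at this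
        exact ⟨hj, (this.mpr ⟨lt_of_lt_of_le hj hr, hm⟩).2⟩

lemma lexLE_antisymm {S T : Set ℕ} (h1 : LexLE S T) (h2 : LexLE T S) : S = T := by
  rcases h1 with rfl | ⟨i, hiT, hiS, hbi⟩
  · rfl
  rcases h2 with heq | ⟨k, hkS, hkT, hbk⟩
  · exact heq.symm
  rcases lt_trichotomy i k with h | rfl | h
  · exact absurd ((hbk i h).mp hiT) hiS
  · exact absurd hiT hkT
  · exact absurd ((hbi k h).mp hkS) hkT

lemma max_force {m : ℕ} {A : Set (ZMod m)} {y w : ZMod m} {r : ℕ}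
    (h : LexLE (restrictSet m A w r) (restrictSet m A y r)) {i : ℕ} (hi : i < r)
    (hagree : ∀ j < i, (w + (j : ZMod m) ∈ A ↔ y + (j : ZMod m) ∈ A))
    (hdiff : ¬((w + (i : ZMod m) ∈ A) ↔ (y + (i : ZMod m) ∈ A))) :
    (y + (i : ZMod m) ∈ A) ∧ ¬ (w + (i : ZMod m) ∈ A) := by
  have key := lexLE_firstDiff h (i := i) (fun j hj => by
      simp only [restrictSet, Set.mem_setOf_eq]
      have := hagree j hj; tauto) (by
      simp only [restrictSet, Set.mem_setOf_eq]
      intro hiff; apply hdiff; constructor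
      · intro hw'; exact (hiff.mp ⟨hi, hw'⟩).2
      · intro hy'; exact (hiff.mpr ⟨hi, hy'⟩).2)
  exact ⟨key.1.2, fun hw' => key.2 ⟨hi, hw'⟩⟩

lemma exists_smul_eq_half (a : ℕ) (ha : 1 ≤ a) (t : ℕ) (ht0 : 0 < t) (htm : t < 2^a)
    (G : AddSubgroup (ZMod (2^a))) (hG : ((t : ℕ) : ZMod (2^a)) ∈ G) :
    ((2^(a-1) : ℕ) : ZMod (2^a)) ∈ G := by
  set g := Nat.gcd t (2^a) with hgdef
  have hdvd : g ∣ 2^a := Nat.gcd_dvd_right _ _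
  have hne : g ≠ 2^a := by
    intro h
    have := Nat.le_of_dvd ht0 (Nat.gcd_dvd_left t (2^a))
    omega
  have hg2 : g ∣ 2^(a-1) := by
    obtain ⟨s, hs, hgs⟩ := (Nat.dvd_prime_pow Nat.prime_two).mp hdvd
    have hsa : s ≠ a := fun hh => hne (by rw [hgs, hh])
    rw [hgs]
    exact pow_dvd_pow 2 (by omega)
  have hgmem : ((g : ℕ) : ZMod (2^a)) ∈ G := by
    have hb := Int.gcd_eq_gcd_ab (t : ℤ) ((2^a : ℕ) : ℤ)
    rw [Int.gcd_natCast_natCast] at hb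
    have hc := congrArg (fun z : ℤ => (z : ZMod (2^a))) hb
    push_cast at hc
    have hz : (2^a : ZMod (2^a)) = 0 := by
      have := ZMod.natCast_self (2^a); push_cast at this; exact this
    rw [hz] at hc
    have hc' : ((g : ℕ) : ZMod (2^a)) =
        ((Int.gcdA (t:ℤ) ((2^a : ℕ):ℤ) : ℤ) : ZMod (2^a)) * ((t : ℕ) : ZMod (2^a)) := by
      push_cast
      rw [hc]; ring
    rw [hc', ← zsmul_eq_mul]
    exact zsmul_mem hG _
  have hmul : (2^(a-1)/g) * g = 2^(a-1) := Nat.div_mul_cancel hg2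
  have : ((2^(a-1) : ℕ) : ZMod (2^a)) =
      ((2^(a-1)/g : ℕ) : ZMod (2^a)) * ((g : ℕ) : ZMod (2^a)) := by
    rw [← Nat.cast_mul, hmul]
  rw [this, ← nsmul_eq_mul]
  exact nsmul_mem hgmem _

set_option maxHeartbeats 2000000 in
/-- Let `m = 2^a` with `a ≥ 2` and `m' = m/4`, let `A` be a pair set in `ℤ/m`, and let
`x` be an `m'`-maximal point of `A`.  Then the maximal point of `A` lies in the
interval `{x − 2m' + 1, …, x}`; that is, it equals `x − j` for some `0 ≤ j < 2m'`. -/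
theorem statement18 (a : ℕ) (ha : 2 ≤ a) (A : Set (ZMod (2 ^ a)))
    (hA : IsPairSet (2 ^ a) A) (x : ZMod (2 ^ a))
    (hx : IsMaxPt (2 ^ a) A (2 ^ a / 4) x)
    (y : ZMod (2 ^ a)) (hy : IsMaxPt (2 ^ a) A (2 ^ a) y) :
    ∃ j : ℕ, j < 2 * (2 ^ a / 4) ∧ y = x - (j : ZMod (2 ^ a)) := by
  classical
  haveI : NeZero (2^a) := ⟨(pow_pos two_pos a).ne'⟩
  have e1 : 2^a = 2^(a-1) * 2 := by
    rw [← pow_succ]; congr 1; omega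
  have e2 : 2^(a-1) = 2^(a-2) * 2 := by
    rw [← pow_succ]; congr 1; omega
  have hm'pos : 0 < 2^(a-2) := pow_pos two_pos _
  have h4 : 2^a / 4 = 2^(a-2) := by omega
  have h2 : 2^a / 2 = 2^(a-1) := by omega
  -- pair set: opposite membership
  have hop : ∀ z : ZMod (2^a), (z + ((2^(a-1) : ℕ) : ZMod (2^a)) ∈ A ↔ ¬ (z ∈ A)) := by
    intro z
    have h := hA z
    simp only [Opp, h2] at h
    rcases h with ⟨h1, h2'⟩ | ⟨h1, h2'⟩
    · exact ⟨fun hh => absurd hh h2', fun _ => absurd h1 (by tauto)⟩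
    · exact ⟨fun _ => h2', fun _ => h1⟩
  have hanti : ∀ j : ℕ,
      (y + ((j + 2^(a-1) : ℕ) : ZMod (2^a)) ∈ A ↔ ¬ (y + ((j : ℕ) : ZMod (2^a)) ∈ A)) := by
    intro j
    have e : ((j + 2^(a-1) : ℕ) : ZMod (2^a))
        = ((j : ℕ) : ZMod (2^a)) + ((2^(a-1) : ℕ) : ZMod (2^a)) := by push_cast; ring
    rw [e, ← add_assoc]
    exact hop _
  have hper : ∀ j : ℕ,
      (y + ((j + 2^a : ℕ) : ZMod (2^a)) ∈ A ↔ y + ((j : ℕ) : ZMod (2^a)) ∈ A) := by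
    intro j
    have e : ((j + 2^a : ℕ) : ZMod (2^a)) = ((j : ℕ) : ZMod (2^a)) := by
      push_cast
      rw [show ((2:ZMod (2^a)))^a = ((2^a : ℕ) : ZMod (2^a)) by push_cast; ring,
        ZMod.natCast_self, add_zero]
    rw [e]
  -- windows of length m' agree at x and y
  have hwin : ∀ j : ℕ, j < 2^(a-2) →
      ((x + ((j : ℕ) : ZMod (2^a)) ∈ A) ↔ (y + ((j : ℕ) : ZMod (2^a)) ∈ A)) := by
    have hxy := lexLE_antisymm (lexLE_mono (Nat.div_le_self _ _) (hy x)) (hx y)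
    intro j hj
    have := Set.ext_iff.mp hxy j
    simp only [restrictSet, Set.mem_setOf_eq] at this
    constructor
    · intro hm; exact (this.mp ⟨by omega, hm⟩).2
    · intro hm; exact (this.mpr ⟨by omega, hm⟩).2
  -- y ∈ A
  have hy0 : y + ((0 : ℕ) : ZMod (2^a)) ∈ A := by
    have hmem : ∀ w : ZMod (2^a), w ∈ A → y ∈ A := by
      intro w hw
      have h := hy w
      rcases h with heq | ⟨i, hiT, hiS, hb⟩
      · have := Set.ext_iff.mp heq 0
        simp only [restrictSet, Set.mem_setOf_eq] at this
        have h0 : w + ((0:ℕ) : ZMod (2^a)) ∈ A := by simpa using hw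
        have := (this.mp ⟨pow_pos two_pos a, h0⟩).2
        simpa using this
      · simp only [restrictSet, Set.mem_setOf_eq] at hiT hiS
        rcases Nat.eq_zero_or_pos i with rfl | hi
        · have := hiT.2; simpa using this
        · have := hb 0 hi
          simp only [restrictSet, Set.mem_setOf_eq] at this
          have h0 : w + ((0:ℕ) : ZMod (2^a)) ∈ A := by simpa using hw
          have := (this.mp ⟨pow_pos two_pos a, h0⟩).2
          simpa using this
    rcases hA y with ⟨h1, -⟩ | ⟨h1, -⟩
    · simpa using h1
    · simpa using hmem _ h1
  -- set up t
  have hxt : x = y + (((x - y).val : ℕ) : ZMod (2^a)) := by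
    rw [ZMod.natCast_rightInverse (x - y)]; ring
  set t := (x - y).val with htdef
  have htlt : t < 2^a := ZMod.val_lt _
  by_cases hcase : t < 2^(a-1)
  · exact ⟨t, by omega, by rw [hxt]; ring⟩
  exfalso
  push_neg at hcase
  set q := t - 2^(a-1) with hqdef
  have hq2 : q + 2^(a-1) = t := by omega
  have hqlt : q < 2^(a-1) := by omega
  -- antiperiod-q prefix
  have hpre : ∀ j : ℕ, j < 2^(a-2) →
      ((y + ((q + j : ℕ) : ZMod (2^a)) ∈ A) ↔ ¬ (y + ((j : ℕ) : ZMod (2^a)) ∈ A)) := by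
    intro j hj
    have h1 := hanti (q + j)
    rw [show q + j + 2^(a-1) = t + j by omega] at h1
    have h2 : (y + ((t + j : ℕ) : ZMod (2^a)) ∈ A) ↔ (x + ((j:ℕ) : ZMod (2^a)) ∈ A) := by
      rw [hxt]
      have e : ((t + j : ℕ) : ZMod (2^a)) = ((t : ℕ) : ZMod (2^a)) + ((j:ℕ) : ZMod (2^a)) := by
        push_cast; ring
      rw [e, ← add_assoc]
    have h3 := hwin j hj
    tauto
  have hq0 : 0 < q := by
    rcases Nat.eq_zero_or_pos q with hq | h
    · exfalso
      have h := hpre 0 hm'pos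
      rw [hq, Nat.add_zero] at h
      tauto
    · exact h
  -- failure of antiperiodicity exists
  have hex : ∃ j : ℕ, ¬ ((y + ((q + j : ℕ) : ZMod (2^a)) ∈ A) ↔ ¬ (y + ((j : ℕ) : ZMod (2^a)) ∈ A)) := by
    by_contra hno
    push_neg at hno
    have hall : ∀ z : ZMod (2^a), z + ((q : ℕ) : ZMod (2^a)) ∈ A ↔ ¬ (z ∈ A) := by
      intro z
      have hz : z = y + (((z - y).val : ℕ) : ZMod (2^a)) := by
        rw [ZMod.natCast_rightInverse (z - y)]; ring
      have h := hno ((z - y).val)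
      have e : ((q + (z - y).val : ℕ) : ZMod (2^a))
          = (((z-y).val : ℕ) : ZMod (2^a)) + ((q : ℕ) : ZMod (2^a)) := by push_cast; ring
      rw [e, ← add_assoc, ← hz] at h
      exact h
    have hstabt : ∀ z : ZMod (2^a), z + ((t : ℕ) : ZMod (2^a)) ∈ A ↔ z ∈ A := by
      intro z
      have e : ((t : ℕ) : ZMod (2^a)) = ((q:ℕ) : ZMod (2^a)) + ((2^(a-1):ℕ) : ZMod (2^a)) := by
        rw [← hq2]; push_cast; ring
      rw [e, ← add_assoc]
      have h1 := hop (z + ((q:ℕ) : ZMod (2^a)))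
      have h2' := hall z
      tauto
    let G : AddSubgroup (ZMod (2^a)) :=
      { carrier := {g | ∀ z : ZMod (2^a), z + g ∈ A ↔ z ∈ A}
        zero_mem' := by intro z; simp
        add_mem' := by
          intro g h hg hh z
          rw [← add_assoc]
          exact (hh (z + g)).trans (hg z)
        neg_mem' := by
          intro g hg z
          have hmem := hg (z + -g)
          rw [add_assoc, neg_add_cancel, add_zero] at hmem
          exact hmem.symm }
    have htG : ((t : ℕ) : ZMod (2^a)) ∈ G := hstabt
    have hhalf := exists_smul_eq_half a (by omega) t (by omega) htlt G htG
    have h1 := hhalf y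
    have h2' := hop y
    have hy0' : y ∈ A := by simpa using hy0
    tauto
  -- least failure
  set i := Nat.find hex with hidef
  have hifail := Nat.find_spec hex
  have himin : ∀ j : ℕ, j < i →
      ((y + ((q + j : ℕ) : ZMod (2^a)) ∈ A) ↔ ¬ (y + ((j : ℕ) : ZMod (2^a)) ∈ A)) :=
    fun j hj => not_not.mp (Nat.find_min hex hj)
  have him' : 2^(a-2) ≤ i := by
    by_contra h
    exact hifail (hpre i (by omega))
  have hilt : i < 2^a := by
    by_contra h
    push_neg at h
    have hm0 : 0 < 2^a := pow_pos two_pos a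
    have hj : i - 2^a < i := by omega
    have hsm := not_not.mp (Nat.find_min hex hj)
    apply hifail
    have p1 := hper (q + (i - 2^a))
    have p2 := hper (i - 2^a)
    rw [show q + (i - 2^a) + 2^a = q + i by omega] at p1
    rw [show (i - 2^a) + 2^a = i by omega] at p2
    tauto
  -- what the window at x looks like
  have hxmem : ∀ j : ℕ, ((x + ((j:ℕ) : ZMod (2^a)) ∈ A) ↔ ¬ (y + ((q + j : ℕ) : ZMod (2^a)) ∈ A)) := by
    intro j
    have h1 := hanti (q + j)
    rw [show q + j + 2^(a-1) = t + j by omega] at h1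
    have h2' : (y + ((t + j : ℕ) : ZMod (2^a)) ∈ A) ↔ (x + ((j:ℕ) : ZMod (2^a)) ∈ A) := by
      rw [hxt]
      have e : ((t + j : ℕ) : ZMod (2^a)) = ((t : ℕ) : ZMod (2^a)) + ((j:ℕ) : ZMod (2^a)) := by
        push_cast; ring
      rw [e, ← add_assoc]
    tauto
  -- maximality of y against x forces S i and S (q+i)
  have hkey := max_force (hy x) (i := i) hilt (fun j hj => by
      have h1 := hxmem j
      have h2' := himin j (by omega)
      tauto) (by
      have h1 := hxmem i
      have h2' : ¬ ((y + ((q + i : ℕ) : ZMod (2^a)) ∈ A) ↔ ¬ (y + ((i : ℕ) : ZMod (2^a)) ∈ A)) := hifail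
      tauto)
  have hSi : y + ((i : ℕ) : ZMod (2^a)) ∈ A := hkey.1
  have hSqi : y + ((q + i : ℕ) : ZMod (2^a)) ∈ A := by
    have := hkey.2
    have h1 := hxmem i
    tauto
  -- trichotomy
  rcases lt_trichotomy i q with hlt | heqq | hgt
  · -- i < q : compare with the window at y + d, d = 2^(a-1) - q
    set d := 2^(a-1) - q with hddef
    have hd0 : 0 < d := by omega
    have hdlt : d < 2^(a-2) := by omega
    have hdi : d < i := by omega
    have hwm : ∀ j : ℕ, ((y + ((d:ℕ) : ZMod (2^a))) + ((j:ℕ) : ZMod (2^a)) ∈ A)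
        ↔ (y + ((d + j : ℕ) : ZMod (2^a)) ∈ A) := by
      intro j
      have e : ((d + j : ℕ) : ZMod (2^a)) = ((d:ℕ) : ZMod (2^a)) + ((j:ℕ) : ZMod (2^a)) := by
        push_cast; ring
      rw [e, ← add_assoc]
    have hforce := max_force (hy (y + ((d:ℕ) : ZMod (2^a)))) (i := i - d) (by omega)
      (fun j hj => by
        have h1 := hwm j
        have h2' := himin (d + j) (by omega)
        rw [show q + (d + j) = j + 2^(a-1) by omega] at h2'
        have h3 := hanti j
        tauto)
      (by
        have h1 := hwm (i - d)
        rw [show d + (i - d) = i by omega] at h1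
        have h3 := hanti (i - d)
        rw [show (i - d) + 2^(a-1) = q + i by omega] at h3
        tauto)
    -- hforce.1 : y + (i - d) ∈ A, but hanti says it's not
    have h3 := hanti (i - d)
    rw [show (i - d) + 2^(a-1) = q + i by omega] at h3
    tauto
  · -- i = q impossible
    have h := himin 0 (by omega)
    rw [Nat.add_zero] at h
    rw [heqq] at hSi
    tauto
  · -- q < i : compare with the window at y + 2q
    have h2q : 2*q < 2^a := by omega
    have hwm : ∀ j : ℕ, ((y + ((2*q:ℕ) : ZMod (2^a))) + ((j:ℕ) : ZMod (2^a)) ∈ A)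
        ↔ (y + ((2*q + j : ℕ) : ZMod (2^a)) ∈ A) := by
      intro j
      have e : ((2*q + j : ℕ) : ZMod (2^a)) = ((2*q:ℕ) : ZMod (2^a)) + ((j:ℕ) : ZMod (2^a)) := by
        push_cast; ring
      rw [e, ← add_assoc]
    have hforce := max_force (hy (y + ((2*q:ℕ) : ZMod (2^a)))) (i := i - q) (by omega)
      (fun j hj => by
        have h1 := hwm j
        have h2' := himin (q + j) (by omega)
        rw [show q + (q + j) = 2*q + j by ring] at h2'
        have h3 := himin j (by omega)
        tauto)
      (by
        have h1 := hwm (i - q)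
        rw [show 2*q + (i - q) = q + i by omega] at h1
        have h3 := himin (i - q) (by omega)
        rw [show q + (i - q) = i by omega] at h3
        tauto)
    have h3 := himin (i - q) (by omega)
    rw [show q + (i - q) = i by omega] at h3
    tauto
end
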